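/- For c ∈ ℝ≥0, the modified logarithmic function λ_c satisfies Condition 6b if and only if 0 ≤ c ≤ 1. -/

import Mathlib

open scoped BigOperators

noncomputable section

namespace FairDiv

/-- The bundle of goods received by agent `i` under the assignment `A` of goods to agents. -/
def bundle {n m : ℕ} (A : Fin m → Fin n) (i : Fin n) : Finset (Fin m) :=
  Finset.univ.filter fun g => A g = i

/-- Additive utility of agent `i` for a set `S` of goods. -/
def util {n m : ℕ} (u : Fin n → Fin m → ℝ) (i : Fin n) (S : Finset (Fin m)) : ℝ :=
  ∑ g ∈ S, u i g

/-- Envy-freeness up to one good. -/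
def EF1 {n m : ℕ} (u : Fin n → Fin m → ℝ) (A : Fin m → Fin n) : Prop :=
  ∀ i j : Fin n, bundle A j ≠ ∅ →
    ∃ g ∈ bundle A j, util u i ((bundle A j).erase g) ≤ util u i (bundle A i)

/-- Welfare of an allocation under the additive welfarist rule with function `f`. -/
def welfare {n m : ℕ} (f : ℝ → EReal) (u : Fin n → Fin m → ℝ) (A : Fin m → Fin n) : EReal :=
  ∑ i : Fin n, f (util u i (bundle A i))

/-- An allocation is chosen by the additive welfarist rule with `f` if it maximizes welfare. -/
def Chosen {n m : ℕ} (f : ℝ → EReal) (u : Fin n → Fin m → ℝ) (A : Fin m → Fin n) : Prop :=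
  ∀ B : Fin m → Fin n, welfare f u B ≤ welfare f u A

/-- An instance is positive-admitting if some allocation gives everyone positive utility. -/
def PositiveAdmitting {n m : ℕ} (u : Fin n → Fin m → ℝ) : Prop :=
  ∃ B : Fin m → Fin n, ∀ i : Fin n, 0 < util u i (bundle B i)

def IdenticalGood {n m : ℕ} (u : Fin n → Fin m → ℝ) : Prop :=
  ∀ i : Fin n, ∃ a : ℝ, 0 < a ∧ ∀ g : Fin m, u i g = a

def TwoValue {n m : ℕ} (u : Fin n → Fin m → ℝ) : Prop :=
  ∃ a₁ a₂ : ℝ, a₁ ≠ a₂ ∧ 0 ≤ a₁ ∧ 0 ≤ a₂ ∧ ∀ i g, u i g = a₁ ∨ u i g = a₂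

def Normalized {n m : ℕ} (u : Fin n → Fin m → ℝ) : Prop :=
  ∀ i j : Fin n, util u i Finset.univ = util u j Finset.univ

def IntegerValued {n m : ℕ} (u : Fin n → Fin m → ℝ) : Prop :=
  ∀ i g, ∃ z : ℕ, u i g = (z : ℝ)

def Binary {n m : ℕ} (u : Fin n → Fin m → ℝ) : Prop :=
  ∀ i g, u i g = 0 ∨ u i g = 1

/-- `Δ_{f,k}(x) = f((k+1)x) − f(kx)`, valued in `EReal` (it is `+∞` iff `f(kx) = −∞`). -/
def Delta (f : ℝ → EReal) (k : ℕ) (x : ℝ) : EReal :=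
  f (((k : ℝ) + 1) * x) - f ((k : ℝ) * x)

/-- Condition 1: `Δ_{f,k}(b) > Δ_{f,k+1}(a)` for all `k ∈ ℤ≥0` and `a, b ∈ ℝ>0`. -/
def Cond1 (f : ℝ → EReal) : Prop :=
  ∀ k : ℕ, ∀ a b : ℝ, 0 < a → 0 < b → Delta f (k + 1) a < Delta f k b

/-- Condition 1a: `Δ_{f,k}` is constant on `ℝ>0` for every `k ∈ ℤ>0`. -/
def Cond1a (f : ℝ → EReal) : Prop :=
  ∀ k : ℕ, 0 < k → ∀ x y : ℝ, 0 < x → 0 < y → Delta f k x = Delta f k y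

/-- Condition 2. -/
def Cond2 (f : ℝ → EReal) : Prop :=
  ∀ a b c d : ℝ, 0 ≤ a → 0 ≤ b → 0 ≤ c → 0 ≤ d →
    min a b ≤ min c d → a * b < c * d → f a + f b < f c + f d

/-- Condition 3: `Δ_{f,k}(b) > Δ_{f,k+1}(a)` for all `k ∈ ℤ≥0` and `a, b ∈ ℤ>0`. -/
def Cond3 (f : ℝ → EReal) : Prop :=
  ∀ k : ℕ, ∀ a b : ℕ, 0 < a → 0 < b → Delta f (k + 1) (a : ℝ) < Delta f k (b : ℝ)

/-- Condition 3a. -/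
def Cond3a (f : ℝ → EReal) : Prop :=
  ∀ k l : ℕ, l < k → ∀ a b : ℕ, 0 < a → 0 < b → Delta f k (a : ℝ) < Delta f l (b : ℝ)

/-- Condition 3b: `Δ_{f,k}(1) > Δ_{f,k+1}(a) > Δ_{f,k+2}(1)` for `k ∈ ℤ≥0`, `a ∈ ℤ>0`. -/
def Cond3b (f : ℝ → EReal) : Prop :=
  ∀ k : ℕ, ∀ a : ℕ, 0 < a →
    Delta f (k + 1) (a : ℝ) < Delta f k 1 ∧ Delta f (k + 2) 1 < Delta f (k + 1) (a : ℝ)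

/-- Condition 4: `Δ_{f,k}(1) > Δ_{f,k+1}(1)` for all `k ∈ ℤ≥0`. -/
def Cond4 (f : ℝ → EReal) : Prop :=
  ∀ k : ℕ, Delta f (k + 1) 1 < Delta f k 1

/-- Condition 5. -/
def Cond5 (f : ℝ → EReal) : Prop :=
  ∀ a b k l r : ℕ, 0 < a → 0 < b → b ≤ a → l * b + r * a < (k + 1) * b →
    Delta f (k + 1) (a : ℝ) <
        f (((l : ℝ) + 1) * (b : ℝ) + (r : ℝ) * (a : ℝ)) - f ((l : ℝ) * (b : ℝ) + (r : ℝ) * (a : ℝ))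
      ∧ Delta f (k + 2) 1 < Delta f (k + 1) (a : ℝ)

/-- Condition 6a: `f((k+1)b−1) − f(kb−1) > Δ_{f,k}(a)` for all `k, a, b ∈ ℤ>0`. -/
def Cond6a (f : ℝ → EReal) : Prop :=
  ∀ k a b : ℕ, 0 < k → 0 < a → 0 < b →
    Delta f k (a : ℝ) < f (((k : ℝ) + 1) * (b : ℝ) - 1) - f ((k : ℝ) * (b : ℝ) - 1)

/-- Condition 6b: `f(y+b) − f(y) > f(x+a) − f(x)` whenever `x/a ≥ (y+1)/b`. -/
def Cond6b (f : ℝ → EReal) : Prop :=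
  ∀ a b : ℕ, ∀ x y : ℕ, 0 < a → 0 < b → ((y : ℝ) + 1) / (b : ℝ) ≤ (x : ℝ) / (a : ℝ) →
    f ((x : ℝ) + (a : ℝ)) - f (x : ℝ) < f ((y : ℝ) + (b : ℝ)) - f (y : ℝ)

/-- Modified logarithmic function `λ_c(x) = log (x + c)`, with `log 0 = −∞`. -/
def lam (c : ℝ) (x : ℝ) : EReal :=
  if x + c = 0 then ⊥ else ((Real.log (x + c) : ℝ) : EReal)

/-- The `p`-mean function `φ_p`, with `φ_p(0) = −∞` for `p ≤ 0`. -/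
def phi (p : ℝ) (x : ℝ) : EReal :=
  if 0 < p then ((x ^ p : ℝ) : EReal)
  else if x = 0 then ⊥
  else if p = 0 then ((Real.log x : ℝ) : EReal)
  else ((-(x ^ p) : ℝ) : EReal)

/-- Modified harmonic number `h_c` on nonnegative integers. -/
def hmod (c : ℝ) (x : ℕ) : EReal :=
  if c = -1 then
    (if x = 0 then (⊥ : EReal)
     else (((∑ t ∈ Finset.range (x - 1), (1 : ℝ) / ((t : ℝ) + 1)) : ℝ) : EReal))
  else (((∑ t ∈ Finset.range x, (1 : ℝ) / ((t : ℝ) + 1 + c)) : ℝ) : EReal)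

/-- Condition 3b for a function defined on nonnegative integers. -/
def Cond3bNat (f : ℕ → EReal) : Prop :=
  ∀ k : ℕ, ∀ a : ℕ, 0 < a →
    f ((k + 2) * a) - f ((k + 1) * a) < f (k + 1) - f k
    ∧ f (k + 3) - f (k + 2) < f ((k + 2) * a) - f ((k + 1) * a)

/-! `λ_c(x+a) - λ_c(x) = log (1 + a/(x+c))`, so for `0 ≤ c` Condition 6b asks for `a (y+c) < b (x+c)`.
From `x/a ≥ (y+1)/b` one gets `a (y+c) ≤ b x - a (1-c)`, which is enough exactly when `c ≤ 1`;
for `c > 1` the instance `b = 1`, `y = 0`, `x = a` with `a (c-1) ≥ c` violates it. -/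

lemma lam_of_pos {c x : ℝ} (h : 0 < x + c) : lam c x = ((Real.log (x + c) : ℝ) : EReal) := by
  simp [lam, h.ne']

lemma lam_sub_lam_lt_lam_sub_lam_iff {c x a y b : ℝ} (hx : 0 < x + c) (hy : 0 < y + c)
    (ha : 0 ≤ a) (hb : 0 ≤ b) :
    lam c (x + a) - lam c x < lam c (y + b) - lam c y ↔ a * (y + c) < b * (x + c) := by
  have hxa : 0 < x + a + c := by linarith
  have hyb : 0 < y + b + c := by linarith
  rw [lam_of_pos hx, lam_of_pos hy, lam_of_pos hxa, lam_of_pos hyb, ← EReal.coe_sub,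
    ← EReal.coe_sub, EReal.coe_lt_coe_iff, ← Real.log_div hxa.ne' hx.ne',
    ← Real.log_div hyb.ne' hy.ne', Real.log_lt_log_iff (by positivity) (by positivity),
    div_lt_div_iff₀ hx hy]
  constructor <;> intro h <;> linarith

lemma lam_sub_lam_lt_lam_sub_lam {c x a y b : ℝ} (hx : 0 < x + c) (hy : 0 ≤ y + c)
    (ha : 0 ≤ a) (hb : 0 < b) (h : a * (y + c) < b * (x + c)) :
    lam c (x + a) - lam c x < lam c (y + b) - lam c y := by
  rcases hy.eq_or_lt with hy | hy
  · rw [lam_of_pos (x := x + a) (by linarith), lam_of_pos hx, lam_of_pos (x := y + b) (by linarith),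
      show lam c y = ⊥ by simp [lam, ← hy], ← EReal.coe_sub, EReal.coe_sub_bot]
    exact EReal.coe_lt_top _
  · exact (lam_sub_lam_lt_lam_sub_lam_iff hx hy ha hb.le).2 h

lemma mul_add_lt_mul_add_of_div_le_div {a b x y c : ℝ} (ha : 0 < a) (hb : 0 < b) (hc : 0 ≤ c)
    (hc1 : c ≤ 1) (h : (y + 1) / b ≤ x / a) : a * (y + c) < b * (x + c) := by
  rw [div_le_div_iff₀ hb ha] at h
  nlinarith [mul_nonneg ha.le (sub_nonneg.2 hc1), mul_nonneg hb.le hc]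

lemma cond6b_lam_of_le_one {c : ℝ} (hc : 0 ≤ c) (hc1 : c ≤ 1) : Cond6b (lam c) := by
  intro a b x y ha hb h
  have ha' : (0 : ℝ) < a := Nat.cast_pos.2 ha
  have hb' : (0 : ℝ) < b := Nat.cast_pos.2 hb
  have hx : (0 : ℝ) < x := by
    have : 0 < (x : ℝ) / a := (div_pos (by positivity) hb').trans_le h
    exact (div_pos_iff_of_pos_right ha').1 this
  exact lam_sub_lam_lt_lam_sub_lam (by positivity) (by positivity) ha'.le hb'
    (mul_add_lt_mul_add_of_div_le_div ha' hb' hc hc1 h)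

lemma not_cond6b_lam_of_one_lt {c : ℝ} (hc : 1 < c) : ¬ Cond6b (lam c) := by
  intro h
  obtain ⟨a, ha⟩ := exists_nat_ge (c / (c - 1))
  have ha' : (0 : ℝ) < a := (div_pos (by linarith) (by linarith)).trans_le ha
  rw [div_le_iff₀ (by linarith)] at ha
  have key := h a 1 a 0 (Nat.cast_pos.1 ha') one_pos (by simp [ha'.ne'])
  push_cast at key
  rw [lam_sub_lam_lt_lam_sub_lam_iff (by linarith) (by linarith) ha'.le zero_le_one] at key
  nlinarith

theorem lam_cond6b (c : ℝ) (hc : 0 ≤ c) :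
    Cond6b (lam c) ↔ (0 ≤ c ∧ c ≤ 1) :=
  ⟨fun h => ⟨hc, not_lt.1 fun hc1 => not_cond6b_lam_of_one_lt hc1 h⟩,
    fun hc' => cond6b_lam_of_le_one hc hc'.2⟩

end FairDiv
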